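/- (Lemma 1) Let G be a DAG, T_s a DFS arborescence rooted at s, s1 a child of s, u, v ∈ T_{s1}, and z = LCA_{T_s}(u,v) with z ≠ u, v. Then s ∈ J(u,v) if and only if there exists a pair of internally vertex-disjoint directed paths in G from s to u and from s to v such that z lies on one of them. -/

import Mathlib

/-!
Let `m` be the deepest tree ancestor of `z` on one of the two paths, and continue that path
after `m` by the tree path from `m` through `z` down to its target. By acyclicity the tree below
`m` meets the kept prefix only in `m`, and by the choice of `m` the tree segment from `m` to `z`
meets neither old path. Below `z` the new tail runs in the subtree of the child `z₁` or `z₂` of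
`z` above `u` resp. `v`. Post-order numbers never increase along arcs of `G`, and if `z₁`'s
subtree is finished first, all its post-order numbers lie below those of `z₂`'s subtree, so no
vertex of `z₁`'s subtree reaches `z₂`'s subtree. This makes the rerouted path to `u` disjoint from
the path to `v`. If `m` lies on the path to `v` instead, that path is rerouted down to `v`, unless
the path to `u` meets the tree path from `z₂` to `v` at some `d`; then the targets are exchanged:
the path to `v` up to `m` continues down the tree to `u`, the path to `u` up to `d` continues down
the tree to `v`.
-/

variable {V : Type*}

/-- A directed graph (given as a relation) is acyclic: no nontrivial closed directed walk. -/
def Acyclic (G : V → V → Prop) : Prop := Irreflexive (Relation.TransGen G)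

/-- `l` is a directed path in `G` from `a` to `b`: consecutive vertices are joined by arcs
of `G` and no vertex is repeated. -/
def IsDipath (G : V → V → Prop) (l : List V) (a b : V) : Prop :=
  l.Chain' G ∧ l.head? = some a ∧ l.getLast? = some b ∧ l.Nodup

/-- The internal vertices of a path (all vertices except the two endpoints). -/
def internalVerts (l : List V) : List V := l.tail.dropLast

/-- `s` is a junction of the pair of distinct vertices `u, v` in `G`: there are directed
paths from `s` to `u` and from `s` to `v` sharing no vertex other than `s`. -/
def IsJunction (G : V → V → Prop) (s u v : V) : Prop :=
  u ≠ v ∧ ∃ p q : List V, IsDipath G p s u ∧ IsDipath G q s v ∧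
    ∀ x, x ∈ p → x ∈ q → x = s

/-- `z` is the lowest common ancestor of `u` and `v` in the tree (arborescence) `T`:
a common ancestor that is a descendant of every common ancestor. -/
def IsTreeLCA (T : V → V → Prop) (u v z : V) : Prop :=
  Relation.ReflTransGen T z u ∧ Relation.ReflTransGen T z v ∧
    ∀ y, Relation.ReflTransGen T y u → Relation.ReflTransGen T y v →
      Relation.ReflTransGen T y z

/-- `s` is a lowest common ancestor of `u, v` in the DAG `G`: a junction of `u, v` such
that there is no directed path from `s` to any other junction of `u, v`. -/
def IsLCA (G : V → V → Prop) (s u v : V) : Prop :=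
  IsJunction G s u v ∧
    ∀ s', s' ≠ s → IsJunction G s' u v → ¬ Relation.TransGen G s s'

/-- A DFS arborescence of `G` rooted at `s`, spanning all descendants of `s`, together
with its post-order numbering and the standard structural properties of depth-first
search: tree arcs are graph arcs, the root has no parent, parents are unique, every
`G`-descendant of `s` is in the tree, `post` is injective on the tree, `post` strictly
decreases from a vertex to its proper tree descendants, the post-order numbers of each
subtree form a contiguous interval, and every graph arc between tree vertices is a
tree/forward arc, a back arc, or a (post-order decreasing) cross arc. -/
structure DFSArborescence (G : V → V → Prop) (s : V) where
  T : V → V → Prop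
  post : V → ℕ
  sub : ∀ ⦃a b⦄, T a b → G a b
  root_no_parent : ∀ a, ¬ T a s
  unique_parent : ∀ ⦃a b c⦄, T a b → T c b → a = c
  verts_reach : ∀ ⦃a b⦄, T a b → Relation.ReflTransGen T s a
  spans : ∀ ⦃v⦄, Relation.ReflTransGen G s v → Relation.ReflTransGen T s v
  post_inj : ∀ ⦃u v⦄, Relation.ReflTransGen T s u → Relation.ReflTransGen T s v →
      post u = post v → u = v
  post_desc : ∀ ⦃u v⦄, Relation.ReflTransGen T s u → Relation.TransGen T u v →
      post v < post u
  post_contig : ∀ ⦃u v x⦄, Relation.ReflTransGen T s u → Relation.ReflTransGen T u v →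
      Relation.ReflTransGen T s x → post v ≤ post x → post x ≤ post u →
      Relation.ReflTransGen T u x
  arc_classify : ∀ ⦃u v⦄, G u v → Relation.ReflTransGen T s u →
      Relation.ReflTransGen T s v →
      Relation.ReflTransGen T u v ∨ Relation.ReflTransGen T v u ∨ post v < post u


open Relation

namespace Acyclic

variable {G R : V → V → Prop} {a b : V}

lemma ne_of_rel (hG : Acyclic G) (h : G a b) : a ≠ b := by
  rintro rfl
  exact hG a (.single h)

lemma eq_of_reflTransGen (hG : Acyclic G) (hab : ReflTransGen G a b)
    (hba : ReflTransGen G b a) : a = b := by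
  rcases reflTransGen_iff_eq_or_transGen.1 hab with h | h
  · exact h.symm
  · exact absurd (h.trans_left hba) (hG a)

lemma mono (hG : Acyclic G) (hRG : R ≤ G) : Acyclic R :=
  fun a h => hG a (TransGen.mono hRG a a h)

end Acyclic

namespace IsDipath

variable {G R : V → V → Prop} {l l₁ l₂ : List V} {a b m x : V}

lemma head_mem (h : IsDipath G l a b) : a ∈ l := List.mem_of_mem_head? h.2.1

lemma last_mem (h : IsDipath G l a b) : b ∈ l := List.mem_of_mem_getLast? h.2.2.1

lemma mono (h : IsDipath R l a b) (hRG : R ≤ G) : IsDipath G l a b :=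
  ⟨List.IsChain.imp hRG h.1, h.2⟩

lemma head_reflTransGen (h : IsDipath G l a b) (hx : x ∈ l) : ReflTransGen G a x := by
  refine List.IsChain.induction (ReflTransGen G a ·) l h.1 (fun _ _ hxy hax => hax.tail hxy)
    (fun hne => ?_) x hx
  rw [(List.head_eq_iff_head?_eq_some hne).2 h.2.1]

lemma reflTransGen_last (h : IsDipath G l a b) (hx : x ∈ l) : ReflTransGen G x b := by
  refine List.IsChain.backwards_induction (ReflTransGen G · b) l h.1
    (fun _ _ hxy hyb => hyb.head hxy) (fun hne => ?_) x hx
  rw [(List.getLast_eq_iff_getLast?_eq_some hne).2 h.2.2.1]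

lemma exists_prefix (h : IsDipath G l a b) (hx : x ∈ l) :
    ∃ l', IsDipath G l' a x ∧ l' ⊆ l := by
  obtain ⟨l₁, l₂, rfl⟩ := List.append_of_mem hx
  obtain ⟨hc, hh, -, hn⟩ := h
  refine ⟨l₁ ++ [x], ⟨hc.prefix ⟨l₂, by simp⟩, ?_, by simp, ?_⟩, by simp⟩
  · cases l₁ <;> simpa using hh
  · exact hn.sublist ((List.nil_sublist l₂).cons_cons x |>.append_left l₁)

lemma append (h₁ : IsDipath G l₁ a m) (h₂ : IsDipath G l₂ m b)
    (hd : ∀ x ∈ l₁, x ∈ l₂ → x = m) :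
    ∃ l, IsDipath G l a b ∧ ∀ x, x ∈ l ↔ x ∈ l₁ ∨ x ∈ l₂ := by
  obtain ⟨t, rfl⟩ : ∃ t, l₂ = m :: t := ⟨l₂.tail, List.eq_cons_of_mem_head? h₂.2.1⟩
  obtain ⟨hc₁, hh₁, hl₁, hn₁⟩ := h₁
  obtain ⟨hc₂, -, hl₂, hn₂⟩ := h₂
  have hmt : m ∉ t := (List.nodup_cons.1 hn₂).1
  refine ⟨l₁ ++ t, ⟨?_, ?_, ?_, ?_⟩, fun x => ?_⟩
  · refine List.isChain_append.2 ⟨hc₁, hc₂.tail, fun x hx y hy => ?_⟩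
    rw [hl₁, Option.mem_some_iff] at hx
    exact hx ▸ List.isChain_cons.1 hc₂ |>.1 y hy
  · cases l₁ <;> simp_all
  · cases t <;> simp_all [List.getLast?_append]
  · refine List.nodup_append.2 ⟨hn₁, (List.nodup_cons.1 hn₂).2, ?_⟩
    rintro x hx _ hxt rfl
    exact hmt (hd x hx (List.mem_cons_of_mem m hxt) ▸ hxt)
  · have hm : m ∈ l₁ := List.mem_of_mem_getLast? hl₁
    simp only [List.mem_append, List.mem_cons]
    constructor
    · tauto
    · rintro (h | rfl | h) <;> tauto

end IsDipath

lemma exists_isDipath_of_reflTransGen {R : V → V → Prop} {a b : V} (hR : Acyclic R)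
    (h : ReflTransGen R a b) :
    ∃ l, IsDipath R l a b := by
  induction h with
  | refl => exact ⟨[a], List.isChain_singleton a, rfl, rfl, List.nodup_singleton a⟩
  | @tail b c _ hbc ih =>
    obtain ⟨l, hl⟩ := ih
    have hbc' : IsDipath R [b, c] b c :=
      ⟨List.isChain_pair.2 hbc, rfl, rfl, by simpa using hR.ne_of_rel hbc⟩
    obtain ⟨l', hl', -⟩ := hl.append hbc' fun x hx hx' => by
      rcases List.mem_pair.1 hx' with rfl | rfl
      · rfl
      · exact (hR.eq_of_reflTransGen (.single hbc) (hl.reflTransGen_last hx)).symm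
    exact ⟨l', hl'⟩

def DisjointDipaths (G : V → V → Prop) (s u v : V) (p q : List V) : Prop :=
  IsDipath G p s u ∧ IsDipath G q s v ∧ ∀ x, x ∈ p → x ∈ q → x = s

lemma DisjointDipaths.symm {G : V → V → Prop} {s u v : V} {p q : List V}
    (h : DisjointDipaths G s u v p q) : DisjointDipaths G s v u q p :=
  ⟨h.2.1, h.1, fun x hq hp => h.2.2 x hp hq⟩

namespace DFSArborescence

variable {G : V → V → Prop} {s : V} (A : DFSArborescence G s) {a b c m u v x y z z₁ z₂ : V}

local notation:50 a:51 " ≤ₜ " b:51 => ReflTransGen A.T a b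

lemma T_le : A.T ≤ G := fun _ _ h => A.sub h

lemma reflTransGen_of_le (h : a ≤ₜ b) : ReflTransGen G a b := ReflTransGen.mono A.T_le a b h

lemma acyclic_T (hG : Acyclic G) : Acyclic A.T := hG.mono A.T_le

lemma eq_of_le_of_reflTransGen (hG : Acyclic G) (hab : a ≤ₜ b) (hba : ReflTransGen G b a) :
    a = b :=
  hG.eq_of_reflTransGen (A.reflTransGen_of_le hab) hba

lemma not_reflTransGen_parent (hG : Acyclic G) (hz : A.T z y) (hyx : y ≤ₜ x) :
    ¬ ReflTransGen G x z :=
  fun hxz => hG z ((TransGen.head' (A.sub hz) (A.reflTransGen_of_le hyx)).trans_left hxz)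

lemma root_le_of_mem {r : List V} (hr : IsDipath G r s b) (hx : x ∈ r) : s ≤ₜ x :=
  A.spans (hr.head_reflTransGen hx)

lemma eq_root_of_le_root (h : a ≤ₜ s) : a = s := by
  rcases h.cases_tail with h | ⟨d, -, hd⟩
  · exact h.symm
  · exact absurd hd (A.root_no_parent d)

lemma eq_or_le_of_le_child (hz : A.T z y) (h : a ≤ₜ y) : a = y ∨ a ≤ₜ z := by
  rcases h.cases_tail with h | ⟨d, had, hdy⟩
  · exact Or.inl h.symm
  · exact Or.inr (A.unique_parent hdy hz ▸ had)

lemma le_total_of_le (hac : a ≤ₜ c) (hbc : b ≤ₜ c) : a ≤ₜ b ∨ b ≤ₜ a := by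
  induction hac generalizing b with
  | refl => exact Or.inr hbc
  | tail hac' hT ih =>
    rcases A.eq_or_le_of_le_child hT hbc with rfl | h
    · exact Or.inl (hac'.tail hT)
    · exact ih h

lemma eq_of_siblings (hG : Acyclic G) (h₁ : A.T z z₁) (h₂ : A.T z z₂) (hx₁ : z₁ ≤ₜ x)
    (hx₂ : z₂ ≤ₜ x) : z₁ = z₂ := by
  wlog h : z₁ ≤ₜ z₂ generalizing z₁ z₂
  · exact (this h₂ h₁ hx₂ hx₁ ((A.le_total_of_le hx₁ hx₂).resolve_left h)).symm
  rcases A.eq_or_le_of_le_child h₂ h with h' | h'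
  · exact h'
  · exact absurd (A.reflTransGen_of_le h') (A.not_reflTransGen_parent hG h₁ .refl)

lemma child_le_of_le_of_ne (hG : Acyclic G) (h₁ : A.T z z₁) (hu : z₁ ≤ₜ u) (hzx : z ≤ₜ x)
    (hxu : x ≤ₜ u) (hxz : x ≠ z) : z₁ ≤ₜ x := by
  rcases A.le_total_of_le hu hxu with h | h
  · exact h
  · rcases A.eq_or_le_of_le_child h₁ h with rfl | h'
    · exact .refl
    · exact absurd (A.eq_of_le_of_reflTransGen hG hzx (A.reflTransGen_of_le h')).symm hxz

lemma post_le (ha : s ≤ₜ a) (h : a ≤ₜ b) : A.post b ≤ A.post a := by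
  rcases reflTransGen_iff_eq_or_transGen.1 h with rfl | h
  · rfl
  · exact (A.post_desc ha h).le

lemma post_lt_of_rel (hG : Acyclic G) (hab : G a b) (ha : s ≤ₜ a) (hb : s ≤ₜ b) :
    A.post b < A.post a := by
  rcases A.arc_classify hab ha hb with h | h | h
  · rcases reflTransGen_iff_eq_or_transGen.1 h with rfl | h
    · exact absurd rfl (hG.ne_of_rel hab)
    · exact A.post_desc ha h
  · exact absurd (A.eq_of_le_of_reflTransGen hG h (.single hab)).symm (hG.ne_of_rel hab)
  · exact h

lemma post_le_of_reflTransGen (hG : Acyclic G) (ha : s ≤ₜ a) (h : ReflTransGen G a b) :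
    A.post b ≤ A.post a := by
  induction h with
  | refl => rfl
  | tail hac hcb ih =>
    have hsc := (A.reflTransGen_of_le ha).trans hac
    exact (A.post_lt_of_rel hG hcb (A.spans hsc) (A.spans (hsc.tail hcb))).le.trans ih

lemma not_reflTransGen_of_siblings (hG : Acyclic G) (hsz : s ≤ₜ z) (h₁ : A.T z z₁)
    (h₂ : A.T z z₂) (hne : z₁ ≠ z₂) (hlt : A.post z₁ < A.post z₂) (hx : z₁ ≤ₜ x)
    (hy : z₂ ≤ₜ y) : ¬ ReflTransGen G x y := by
  intro hxy
  have hsx : s ≤ₜ x := (hsz.tail h₁).trans hx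
  have hz₂x : z₂ ≤ₜ x := A.post_contig (hsz.tail h₂) hy hsx (A.post_le_of_reflTransGen hG hsx hxy)
    ((A.post_le (hsz.tail h₁) hx).trans hlt.le)
  exact hne (A.eq_of_siblings hG h₁ h₂ hx hz₂x)

lemma exists_deepest_ancestor (S : Set V) (hS : S.Finite) (hSs : ∀ x ∈ S, s ≤ₜ x)
    (hSz : ∃ x ∈ S, x ≤ₜ z) : ∃ m ∈ S, m ≤ₜ z ∧ ∀ x ∈ S, m ≤ₜ x → x ≤ₜ z → x = m := by
  obtain ⟨m, ⟨hmS, hmz⟩, hmin⟩ :=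
    Set.exists_min_image {x ∈ S | x ≤ₜ z} A.post (hS.subset fun _ h => h.1) hSz
  refine ⟨m, hmS, hmz, fun x hxS hmx hxz => ?_⟩
  exact (A.post_inj (hSs m hmS) (hSs x hxS)
    (le_antisymm (hmin x ⟨hxS, hxz⟩) (A.post_le (hSs m hmS) hmx))).symm

lemma exists_dipath_through (hG : Acyclic G) (hac : a ≤ₜ c) (hcb : c ≤ₜ b) :
    ∃ l, IsDipath G l a b ∧ c ∈ l ∧ ∀ x ∈ l, (a ≤ₜ x ∧ x ≤ₜ c) ∨ (c ≤ₜ x ∧ x ≤ₜ b) := by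
  obtain ⟨l₁, hl₁⟩ := exists_isDipath_of_reflTransGen (A.acyclic_T hG) hac
  obtain ⟨l₂, hl₂⟩ := exists_isDipath_of_reflTransGen (A.acyclic_T hG) hcb
  obtain ⟨l, hl, hmem⟩ := (hl₁.mono A.T_le).append (hl₂.mono A.T_le)
    fun x h₁ h₂ => ((A.acyclic_T hG).eq_of_reflTransGen (hl₂.head_reflTransGen h₂)
      (hl₁.reflTransGen_last h₁)).symm
  refine ⟨l, hl, (hmem c).2 (Or.inr hl₂.head_mem), fun x hx => ?_⟩
  rcases (hmem x).1 hx with h | h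
  · exact Or.inl ⟨hl₁.head_reflTransGen h, hl₁.reflTransGen_last h⟩
  · exact Or.inr ⟨hl₂.head_reflTransGen h, hl₂.reflTransGen_last h⟩

lemma exists_reroute (hG : Acyclic G) {r : List V} {t : V} (hr : IsDipath G r s b) (ha : a ∈ r)
    (hac : a ≤ₜ c) (hct : c ≤ₜ t) :
    ∃ r', IsDipath G r' s t ∧ c ∈ r' ∧ ∀ x ∈ r',
      (x ∈ r ∧ ReflTransGen G x a) ∨ (a ≤ₜ x ∧ x ≤ₜ c) ∨ (c ≤ₜ x ∧ x ≤ₜ t) := by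
  obtain ⟨r₁, hr₁, hr₁r⟩ := hr.exists_prefix ha
  obtain ⟨l, hl, hcl, hlmem⟩ := A.exists_dipath_through hG hac hct
  obtain ⟨r', hr', hmem⟩ := hr₁.append hl fun x h₁ h₂ =>
    (hG.eq_of_reflTransGen (hl.head_reflTransGen h₂) (hr₁.reflTransGen_last h₁)).symm
  refine ⟨r', hr', (hmem c).2 (Or.inr hcl), fun x hx => ?_⟩
  rcases (hmem x).1 hx with h | h
  · exact Or.inl ⟨hr₁r h, hr₁.reflTransGen_last h⟩
  · exact Or.inr (hlmem x h)

end DFSArborescence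

namespace DFSArborescence

variable {G : V → V → Prop} {s : V} (A : DFSArborescence G s) {d m u v z z₁ z₂ : V}
  {p q : List V}

local notation:50 a:51 " ≤ₜ " b:51 => ReflTransGen A.T a b

lemma exists_reroute_left (hG : Acyclic G) (hsz : s ≤ₜ z) (h₁ : A.T z z₁) (h₂ : A.T z z₂)
    (hne : z₁ ≠ z₂) (hlt : A.post z₁ < A.post z₂) (hu : z₁ ≤ₜ u) (hv : z₂ ≤ₜ v)
    (hpq : DisjointDipaths G s u v p q) (hzq : z ∉ q) (hmp : m ∈ p) (hmz : m ≤ₜ z)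
    (hdeep : ∀ x ∈ q, m ≤ₜ x → x ≤ₜ z → x = m) :
    ∃ p', DisjointDipaths G s u v p' q ∧ z ∈ p' := by
  obtain ⟨hp, hq, hd⟩ := hpq
  obtain ⟨p', hp', hzp', hmem⟩ := A.exists_reroute hG hp hmp hmz (.head h₁ hu)
  refine ⟨p', ⟨hp', hq, fun x hx hxq => ?_⟩, hzp'⟩
  rcases hmem x hx with ⟨hxp, -⟩ | ⟨hmx, hxz⟩ | ⟨hzx, hxu⟩
  · exact hd x hxp hxq
  · exact hd x (hdeep x hxq hmx hxz ▸ hmp) hxq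
  · have hz₁x := A.child_le_of_le_of_ne hG h₁ hu hzx hxu (ne_of_mem_of_not_mem hxq hzq)
    exact absurd (hq.reflTransGen_last hxq)
      (A.not_reflTransGen_of_siblings hG hsz h₁ h₂ hne hlt hz₁x hv)

lemma exists_reroute_right (hG : Acyclic G) (h₂ : A.T z z₂) (hv : z₂ ≤ₜ v)
    (hpq : DisjointDipaths G s u v p q) (hzp : z ∉ p) (hmq : m ∈ q) (hmp : m ∉ p)
    (hmz : m ≤ₜ z) (hdeep : ∀ x ∈ p, m ≤ₜ x → x ≤ₜ z → x = m)
    (hpv : ∀ x ∈ p, z₂ ≤ₜ x → ¬ x ≤ₜ v) :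
    ∃ q', DisjointDipaths G s u v p q' ∧ z ∈ q' := by
  obtain ⟨hp, hq, hd⟩ := hpq
  obtain ⟨q', hq', hzq', hmem⟩ := A.exists_reroute hG hq hmq hmz (.head h₂ hv)
  refine ⟨q', ⟨hp, hq', fun x hxp hx => ?_⟩, hzq'⟩
  rcases hmem x hx with ⟨hxq, -⟩ | ⟨hmx, hxz⟩ | ⟨hzx, hxv⟩
  · exact hd x hxp hxq
  · exact absurd (hdeep x hxp hmx hxz ▸ hxp) hmp
  · have hz₂x := A.child_le_of_le_of_ne hG h₂ hv hzx hxv (ne_of_mem_of_not_mem hxp hzp)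
    exact absurd hxv (hpv x hxp hz₂x)

lemma exists_reroute_swap (hG : Acyclic G) (hsz : s ≤ₜ z) (h₁ : A.T z z₁) (h₂ : A.T z z₂)
    (hne : z₁ ≠ z₂) (hlt : A.post z₁ < A.post z₂) (hu : z₁ ≤ₜ u)
    (hpq : DisjointDipaths G s u v p q) (hzp : z ∉ p) (hmq : m ∈ q) (hmp : m ∉ p)
    (hmz : m ≤ₜ z) (hdeep : ∀ x ∈ p, m ≤ₜ x → x ≤ₜ z → x = m) (hdp : d ∈ p) (hz₂d : z₂ ≤ₜ d)
    (hdv : d ≤ₜ v) :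
    ∃ p' q', DisjointDipaths G s u v p' q' ∧ z ∈ p' := by
  obtain ⟨hp, hq, hd⟩ := hpq
  obtain ⟨p', hp', hzp', hmemp⟩ := A.exists_reroute hG hq hmq hmz (.head h₁ hu)
  obtain ⟨q', hq', -, hmemq⟩ := A.exists_reroute hG hp hdp .refl hdv
  refine ⟨p', q', ⟨hp', hq', fun x hx hx' => ?_⟩, hzp'⟩
  rcases hmemq x hx' with ⟨hxp, hxd⟩ | hdx
  · rcases hmemp x hx with ⟨hxq, -⟩ | ⟨hmx, hxz⟩ | ⟨hzx, hxu⟩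
    · exact hd x hxp hxq
    · exact absurd (hdeep x hxp hmx hxz ▸ hxp) hmp
    · have hz₁x := A.child_le_of_le_of_ne hG h₁ hu hzx hxu (ne_of_mem_of_not_mem hxp hzp)
      exact absurd hxd (A.not_reflTransGen_of_siblings hG hsz h₁ h₂ hne hlt hz₁x hz₂d)
  · have hz₂x : z₂ ≤ₜ x := hz₂d.trans (hdx.elim And.left And.left)
    exfalso
    rcases hmemp x hx with ⟨-, hxm⟩ | ⟨-, hxz⟩ | ⟨hzx, hxu⟩
    · exact A.not_reflTransGen_parent hG h₂ hz₂x (hxm.trans (A.reflTransGen_of_le hmz))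
    · exact A.not_reflTransGen_parent hG h₂ hz₂x (A.reflTransGen_of_le hxz)
    · by_cases hxz : x = z
      · exact A.not_reflTransGen_parent hG h₂ hz₂x (hxz ▸ .refl)
      · exact hne (A.eq_of_siblings hG h₁ h₂ (A.child_le_of_le_of_ne hG h₁ hu hzx hxu hxz) hz₂x)

lemma exists_through_of_post_lt (hG : Acyclic G) (hsz : s ≤ₜ z) (h₁ : A.T z z₁)
    (h₂ : A.T z z₂) (hne : z₁ ≠ z₂) (hlt : A.post z₁ < A.post z₂) (hu : z₁ ≤ₜ u)
    (hv : z₂ ≤ₜ v) (hpq : DisjointDipaths G s u v p q) (hzp : z ∉ p) (hzq : z ∉ q) :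
    ∃ p' q', DisjointDipaths G s u v p' q' ∧ (z ∈ p' ∨ z ∈ q') := by
  obtain ⟨m, hmS, hmz, hdeep⟩ := A.exists_deepest_ancestor {x | x ∈ p ∨ x ∈ q}
    (p.finite_toSet.union q.finite_toSet)
    (fun x hx => hx.elim (A.root_le_of_mem hpq.1) (A.root_le_of_mem hpq.2.1))
    ⟨s, Or.inl hpq.1.head_mem, hsz⟩
  by_cases hmp : m ∈ p
  · obtain ⟨p', hpq', hz⟩ := A.exists_reroute_left hG hsz h₁ h₂ hne hlt hu hv hpq hzq hmp hmz
      fun x hx => hdeep x (Or.inr hx)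
    exact ⟨p', q, hpq', Or.inl hz⟩
  have hmq : m ∈ q := hmS.resolve_left hmp
  have hdeep_p : ∀ x ∈ p, m ≤ₜ x → x ≤ₜ z → x = m := fun x hx => hdeep x (Or.inl hx)
  by_cases hpv : ∃ d ∈ p, z₂ ≤ₜ d ∧ d ≤ₜ v
  · obtain ⟨d, hdp, hz₂d, hdv⟩ := hpv
    obtain ⟨p', q', hpq', hz⟩ := A.exists_reroute_swap hG hsz h₁ h₂ hne hlt hu hpq hzp hmq hmp
      hmz hdeep_p hdp hz₂d hdv
    exact ⟨p', q', hpq', Or.inl hz⟩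
  · simp only [not_exists, not_and] at hpv
    obtain ⟨q', hpq', hz⟩ := A.exists_reroute_right hG h₂ hv hpq hzp hmq hmp hmz hdeep_p hpv
    exact ⟨p, q', hpq', Or.inr hz⟩

lemma exists_through_lca (hG : Acyclic G) (hz : IsTreeLCA A.T u v z) (hzu : z ≠ u)
    (hzv : z ≠ v) (hpq : DisjointDipaths G s u v p q) :
    ∃ p' q', DisjointDipaths G s u v p' q' ∧ (z ∈ p' ∨ z ∈ q') := by
  by_cases hzpq : z ∈ p ∨ z ∈ q
  · exact ⟨p, q, hpq, hzpq⟩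
  rw [not_or] at hzpq
  obtain ⟨hzu', hzv', hlca⟩ := hz
  have hsz : s ≤ₜ z := by
    rcases A.le_total_of_le (A.root_le_of_mem hpq.1 hpq.1.last_mem) hzu' with h | h
    · exact h
    · exact absurd (A.eq_root_of_le_root h ▸ hpq.1.head_mem) hzpq.1
  obtain ⟨z₁, h₁, hu⟩ := hzu'.cases_head.resolve_left hzu
  obtain ⟨z₂, h₂, hv⟩ := hzv'.cases_head.resolve_left hzv
  have hne : z₁ ≠ z₂ := by
    rintro rfl
    exact A.not_reflTransGen_parent hG h₁ .refl (A.reflTransGen_of_le (hlca z₁ hu hv))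
  rcases lt_trichotomy (A.post z₁) (A.post z₂) with hlt | heq | hgt
  · exact A.exists_through_of_post_lt hG hsz h₁ h₂ hne hlt hu hv hpq hzpq.1 hzpq.2
  · exact absurd (A.post_inj (hsz.tail h₁) (hsz.tail h₂) heq) hne
  · obtain ⟨q', p', hpq', hz⟩ := A.exists_through_of_post_lt hG hsz h₂ h₁ hne.symm hgt hv hu
      hpq.symm hzpq.2 hzpq.1
    exact ⟨p', q', hpq'.symm, hz.symm⟩

end DFSArborescence

theorem stmt6_general (G : V → V → Prop) (hG : Acyclic G) (s : V) (A : DFSArborescence G s)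
    (u v : V) (huv : u ≠ v) (z : V) (hz : IsTreeLCA A.T u v z) (hzu : z ≠ u) (hzv : z ≠ v) :
    IsJunction G s u v ↔
      ∃ p q : List V, IsDipath G p s u ∧ IsDipath G q s v ∧
        (∀ x, x ∈ p → x ∈ q → x = s) ∧ (z ∈ p ∨ z ∈ q) := by
  constructor
  · rintro ⟨-, p, q, hpq⟩
    obtain ⟨p', q', hpq', hz'⟩ := A.exists_through_lca hG hz hzu hzv hpq
    exact ⟨p', q', hpq'.1, hpq'.2.1, hpq'.2.2, hz'⟩
  · rintro ⟨p, q, hp, hq, hd, -⟩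
    exact ⟨huv, p, q, hp, hq, hd⟩

/-- Lemma 1: with `z = LCA_{T_s}(u,v)`, `z ≠ u, v`, the vertex `s` is a junction of
`u, v` iff some pair of internally disjoint witnessing paths passes through `z`. -/
theorem stmt6 (G : V → V → Prop) (hG : Acyclic G) (s : V) (A : DFSArborescence G s)
    (s1 : V) (h1 : A.T s s1) (u v : V)
    (hu : Relation.ReflTransGen A.T s1 u) (hv : Relation.ReflTransGen A.T s1 v)
    (huv : u ≠ v) (z : V) (hz : IsTreeLCA A.T u v z) (hzu : z ≠ u) (hzv : z ≠ v) :
    IsJunction G s u v ↔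
      ∃ p q : List V, IsDipath G p s u ∧ IsDipath G q s v ∧
        (∀ x, x ∈ p → x ∈ q → x = s) ∧ (z ∈ p ∨ z ∈ q) :=
  stmt6_general G hG s A u v huv z hz hzu hzv
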